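/- arXiv:2101.11128 — 3 statements merged into one kernel-verified Lean document; each statement's English description precedes it below -/
import Mathlib

section
/- Let V be a finite-dimensional real inner product space, W : Fin m → V a linearly independent family with Gram matrix M (entries M_{αβ} = ⟨W_α,W_β⟩, inverse entries m_{αβ}), and n ∈ V with n ∉ span{W_1,…,W_m}; set D := ⟨n,n⟩ − Σ_{α,β} m_{αβ}⟨n,W_α⟩⟨n,W_β⟩ (so D ≠ 0). For arbitrary v ∈ V define c := ⟨n,v⟩ − Σ_{α,β} m_{αβ}⟨n,W_β⟩⟨W_α,v⟩, ε := −2c/D, λ_k := (2c/D)·Σ_ℓ m_{kℓ}⟨n,W_ℓ⟩, and δ(v) := v + Σ_k λ_k W_k + ε·n. Then ⟨W_α, δ(v)⟩ = ⟨W_α, v⟩ for every α; that is, the global nonholonomic impact map leaves all constraint momentum functions P(W^α) invariant. -/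
/-! With `b = (⟪n, W l⟫)_l`, the vector `Σ_k (M⁻¹ b)_k • W_k` is the orthogonal projection of `n`
onto `span W`, since its inner products with the `W_α` are those of `n`. The correction
`Σ_k λ_k • W_k + ε • n` of the impact map is `-(2c/D)` times `n` minus this projection, hence
orthogonal to every `W_α`. -/

open scoped RealInnerProductSpace Matrix

section GramMatrix

variable {ι : Type*} [Fintype ι]

theorem inner_sum_smul_eq_gram_mulVec {V : Type*} [SeminormedAddCommGroup V]
    [InnerProductSpace ℝ V] (W : ι → V) (x : ι → ℝ) (i : ι) :
    ⟪W i, ∑ k, x k • W k⟫ = (Matrix.gram ℝ W *ᵥ x) i := by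
  simp only [inner_sum, real_inner_smul_right, Matrix.mulVec, dotProduct, Matrix.gram_apply,
    mul_comm]

theorem inner_sum_gram_inv_mulVec_smul {V : Type*} [NormedAddCommGroup V]
    [InnerProductSpace ℝ V] [DecidableEq ι] {W : ι → V} (hW : LinearIndependent ℝ W)
    (b : ι → ℝ) (i : ι) :
    ⟪W i, ∑ k, ((Matrix.gram ℝ W)⁻¹ *ᵥ b) k • W k⟫ = b i := by
  have hdet : IsUnit (Matrix.gram ℝ W).det :=
    isUnit_iff_ne_zero.mpr (Matrix.det_gram_ne_zero_iff_linearIndependent.mpr hW)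
  rw [inner_sum_smul_eq_gram_mulVec, Matrix.mulVec_mulVec, Matrix.mul_nonsing_inv _ hdet,
    Matrix.one_mulVec]

end GramMatrix

theorem stmt5_general {V : Type*} [NormedAddCommGroup V] [InnerProductSpace ℝ V]
    {m : ℕ} (W : Fin m → V) (hW : LinearIndependent ℝ W)
    (M : Matrix (Fin m) (Fin m) ℝ) (hM : ∀ α β, M α β = ⟪W α, W β⟫)
    (n : V)
    (D : ℝ)
    (v : V) (c : ℝ)
    (ε : ℝ) (hε : ε = -2 * c / D)
    (lam : Fin m → ℝ)
    (hlam : ∀ k, lam k = (2 * c / D) * ∑ l, M⁻¹ k l * ⟪n, W l⟫)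
    (δv : V) (hδ : δv = v + (∑ k, lam k • W k) + ε • n) :
    ∀ α, ⟪W α, δv⟫ = ⟪W α, v⟫ := by
  intro α
  have hM : M = Matrix.gram ℝ W := Matrix.ext hM
  have hlam : lam = (2 * c / D) • (M⁻¹ *ᵥ fun l ↦ ⟪n, W l⟫) := funext hlam
  have hsum : ⟪W α, ∑ k, lam k • W k⟫ = 2 * c / D * ⟪n, W α⟫ := by
    simp only [hlam, hM, Pi.smul_apply, smul_eq_mul, mul_smul, ← Finset.smul_sum,
      real_inner_smul_right, inner_sum_gram_inv_mulVec_smul hW]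
  rw [hδ, inner_add_right, inner_add_right, hsum, real_inner_smul_right, hε,
    real_inner_comm n (W α)]
  ring

/-- The global nonholonomic impact map (Remark 3.3, eq. (16) of the paper) leaves
all constraint momentum functions invariant: `⟪W α, δ v⟫ = ⟪W α, v⟫`. -/
theorem stmt5 {V : Type*} [NormedAddCommGroup V] [InnerProductSpace ℝ V]
    [FiniteDimensional ℝ V]
    {m : ℕ} (W : Fin m → V) (hW : LinearIndependent ℝ W)
    (M : Matrix (Fin m) (Fin m) ℝ) (hM : ∀ α β, M α β = ⟪W α, W β⟫)
    (n : V) (hn : n ∉ Submodule.span ℝ (Set.range W))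
    (D : ℝ)
    (hD : D = ⟪n, n⟫ - ∑ α, ∑ β, M⁻¹ α β * (⟪n, W α⟫ * ⟪n, W β⟫))
    (v : V) (c : ℝ)
    (hc : c = ⟪n, v⟫ - ∑ α, ∑ β, M⁻¹ α β * (⟪n, W β⟫ * ⟪W α, v⟫))
    (ε : ℝ) (hε : ε = -2 * c / D)
    (lam : Fin m → ℝ)
    (hlam : ∀ k, lam k = (2 * c / D) * ∑ l, M⁻¹ k l * ⟪n, W l⟫)
    (δv : V) (hδ : δv = v + (∑ k, lam k • W k) + ε • n) :
    ∀ α, ⟪W α, δv⟫ = ⟪W α, v⟫ :=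
  stmt5_general W hW M hM n D v c ε hε lam hlam δv hδ
end

section
/- Let n ≥ 1 and let u, v : Fin n → ℝ satisfy u_n ≠ 0 and Σ_{i=1}^{n} u_i v_i = u_n. Let V be a module over ℝ with exterior algebra Λ(V), let x : Fin(n−1) → V and p : Fin n → V be families of elements, and for j ∈ {1,…,n−1} set q_j := p_j − (2v_j/u_n)·Σ_{i=1}^{n} u_i·p_i. Let a : Fin(n−1) → ℝ, b : Fin n → ℝ, and ν := Σ_{j=1}^{n−1} a_j·x_j + Σ_{i=1}^{n} b_i·p_i. Then in Λ(V): ν ∧ (Σ_{j=1}^{n−1} x_j ∧ q_j)^{n−1} = (−1)^{⌊(n−1)/2⌋} · (n−1)! · (2·Σ_{i=1}^{n} v_i b_i − b_n) · x_1∧…∧x_{n−1}∧p_1∧…∧p_n. -/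
open ExteriorAlgebra

section Helpers

variable {V : Type*} [AddCommGroup V] [Module ℝ V]

private lemma swap12 (a b : V) : ι ℝ a * ι ℝ b = -(ι ℝ b * ι ℝ a) :=
  eq_neg_of_add_eq_zero_left (ι_add_mul_swap a b)

private lemma commL12 (v : V) : ∀ (l : List V),
    ι ℝ v * (l.map (ι ℝ)).prod = ((-1 : ℝ) ^ l.length) • ((l.map (ι ℝ)).prod * ι ℝ v) := by
  intro l
  induction l with
  | nil => simp
  | cons w t ih =>
    simp only [List.map_cons, List.prod_cons, List.length_cons]
    rw [← mul_assoc, swap12 v w, neg_mul, mul_assoc, ih, mul_smul_comm, pow_succ]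
    simp [mul_smul, mul_assoc]

private lemma commR12 (v : V) (l : List V) :
    (l.map (ι ℝ)).prod * ι ℝ v = ((-1 : ℝ) ^ l.length) • (ι ℝ v * (l.map (ι ℝ)).prod) := by
  rw [commL12, smul_smul, ← mul_pow]
  simp

private lemma killL12 : ∀ (l : List V) (v : V), v ∈ l → ι ℝ v * (l.map (ι ℝ)).prod = 0 := by
  intro l
  induction l with
  | nil => intro v hv; simp at hv
  | cons w t ih =>
    intro v hv
    simp only [List.map_cons, List.prod_cons]
    rcases List.mem_cons.1 hv with h | h
    · subst h
      rw [← mul_assoc, ι_sq_zero, zero_mul]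
    · rw [← mul_assoc, swap12 v w, neg_mul, mul_assoc, ih v h, mul_zero, neg_zero]

private lemma killR12 (l : List V) (v : V) (hv : v ∈ l) : (l.map (ι ℝ)).prod * ι ℝ v = 0 := by
  rw [commR12, killL12 l v hv, smul_zero]

private lemma evenComm12 (a b c : V) : ι ℝ c * (ι ℝ a * ι ℝ b) = (ι ℝ a * ι ℝ b) * ι ℝ c := by
  rw [← mul_assoc, swap12 c a, neg_mul, mul_assoc, swap12 c b, mul_neg, neg_neg, ← mul_assoc]

private lemma pairCommute12 (a b c d : V) : Commute (ι ℝ a * ι ℝ b) (ι ℝ c * ι ℝ d) := by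
  show _ * _ = _ * _
  rw [← mul_assoc, ← evenComm12, mul_assoc, ← evenComm12, ← mul_assoc, ← mul_assoc]

private lemma sq_zero12 (a b : V) : (ι ℝ a * ι ℝ b) * (ι ℝ a * ι ℝ b) = 0 := by
  rw [mul_assoc, ← mul_assoc (ι ℝ b), swap12 b a, neg_mul, mul_neg, ← mul_assoc,
    ← mul_assoc, ι_sq_zero, zero_mul, zero_mul, neg_zero]

private lemma memOfFn12 {α : Type*} {n : ℕ} (f : Fin n → α) (j : Fin n) : f j ∈ List.ofFn f :=
  List.mem_ofFn.2 ⟨j, rfl⟩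

private lemma powForm12 : ∀ (n : ℕ) (x s : Fin n → V),
    (∑ j : Fin n, ι ℝ (x j) * ι ℝ (s j)) ^ n
      = (((-1 : ℝ) ^ n.choose 2) * n.factorial) •
        (((List.ofFn x).map (ι ℝ)).prod * ((List.ofFn s).map (ι ℝ)).prod) := by
  intro n
  induction n with
  | zero => intro x s; simp
  | succ n ih =>
    intro x s
    set x' : Fin n → V := fun j => x j.castSucc with hx'
    set s' : Fin n → V := fun j => s j.castSucc with hs'
    set ω : ExteriorAlgebra ℝ V := ∑ j : Fin n, ι ℝ (x' j) * ι ℝ (s' j) with hω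
    set t : ExteriorAlgebra ℝ V := ι ℝ (x (Fin.last n)) * ι ℝ (s (Fin.last n)) with ht
    have hsplit : (∑ j : Fin (n+1), ι ℝ (x j) * ι ℝ (s j)) = ω + t :=
      Fin.sum_univ_castSucc _
    have hc : Commute ω t := Commute.sum_left _ _ _ fun j _ => pairCommute12 _ _ _ _
    have ht2 : t ^ 2 = 0 := by rw [sq]; exact sq_zero12 _ _
    have htm : ∀ m, 2 ≤ m → t ^ m = 0 := by
      intro m hm
      obtain ⟨k, rfl⟩ := Nat.exists_eq_add_of_le hm
      rw [pow_add, ht2, zero_mul]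
    set X' : ExteriorAlgebra ℝ V := ((List.ofFn x').map (ι ℝ)).prod with hX'
    set S' : ExteriorAlgebra ℝ V := ((List.ofFn s').map (ι ℝ)).prod with hS'
    have hlenS : (List.ofFn s').length = n := List.length_ofFn
    have hXS_kill : ∀ j : Fin n, (X' * S') * (ι ℝ (x' j) * ι ℝ (s' j)) = 0 := by
      intro j
      rw [← mul_assoc, mul_assoc X' S', commR12 (x' j) (List.ofFn s'), hlenS,
        mul_smul_comm, ← mul_assoc, killR12 _ _ (memOfFn12 x' j), zero_mul, smul_zero,
        zero_mul]
    have hωn : ω ^ n = (((-1 : ℝ) ^ n.choose 2) * n.factorial) • (X' * S') := ih x' s'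
    have hωsucc : ω ^ (n+1) = 0 := by
      rw [pow_succ, hωn, smul_mul_assoc, hω, Finset.mul_sum]
      rw [Finset.sum_eq_zero fun j _ => hXS_kill j, smul_zero]
    have hωt : (X' * S') * t = ((-1 : ℝ) ^ n) •
        ((((List.ofFn x).map (ι ℝ)).prod * (((List.ofFn s).map (ι ℝ)).prod))) := by
      rw [List.ofFn_succ' x, List.ofFn_succ' s, List.map_concat, List.map_concat,
        List.prod_concat, List.prod_concat]
      rw [ht, ← mul_assoc, mul_assoc X' S', commR12 (x (Fin.last n)) (List.ofFn s')]
      rw [hlenS, mul_smul_comm, smul_mul_assoc]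
      rw [← mul_assoc, ← mul_assoc]
    rw [hsplit, hc.add_pow, Finset.sum_range_succ, Finset.sum_range_succ,
      Finset.sum_eq_zero (fun k hk => by
        rw [htm (n + 1 - k) (by have := Finset.mem_range.1 hk; omega), mul_zero, zero_mul])]
    rw [hωsucc, Nat.sub_self, pow_zero, mul_one, Nat.choose_self, Nat.cast_one, mul_one,
      Nat.choose_succ_self_right, zero_add, add_zero]
    have h1 : n + 1 - n = 1 := by omega
    rw [h1, pow_one, hωn, smul_mul_assoc, hωt, smul_smul, smul_mul_assoc,
      ← (Nat.cast_commute (n+1) _).eq, ← nsmul_eq_mul, ← Nat.cast_smul_eq_nsmul ℝ, smul_smul]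
    congr 1
    have hch : (n+1).choose 2 = n.choose 2 + n := by
      rw [Nat.choose_succ_succ, Nat.choose_one_right, add_comm]
    rw [hch, pow_add, Nat.factorial_succ, Nat.cast_mul]
    push_cast
    ring

private lemma Sz12 (z : V) : ∀ (n : ℕ) (r : Fin n → V) (c : Fin n → ℝ),
    ((List.ofFn (fun j => r j - c j • z)).map (ι ℝ)).prod * ι ℝ z
      = ((List.ofFn r).map (ι ℝ)).prod * ι ℝ z := by
  intro n
  induction n with
  | zero => intro r c; simp
  | succ n ih =>
    intro r c
    rw [List.ofFn_succ (f := fun j => r j - c j • z), List.ofFn_succ (f := r),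
      List.map_cons, List.map_cons, List.prod_cons, List.prod_cons,
      mul_assoc, mul_assoc, ih (fun i => r i.succ) (fun i => c i.succ)]
    have hz : ι ℝ z * (((List.ofFn (fun i => r i.succ)).map (ι ℝ)).prod * ι ℝ z) = 0 := by
      rw [← mul_assoc, commL12 z (List.ofFn fun i => r i.succ), smul_mul_assoc,
        mul_assoc, ι_sq_zero, mul_zero, smul_zero]
    rw [map_sub, map_smul, sub_mul, smul_mul_assoc, hz, smul_zero, sub_zero]

private lemma muS12 (z : V) (βz : ℝ) : ∀ (n : ℕ) (r : Fin n → V) (c β : Fin n → ℝ),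
    ι ℝ ((∑ i, β i • r i) + βz • z) *
        ((List.ofFn (fun j => r j - c j • z)).map (ι ℝ)).prod
      = (((-1 : ℝ) ^ n) * (βz + ∑ j, c j * β j)) •
        (((List.ofFn r).map (ι ℝ)).prod * ι ℝ z) := by
  intro n
  induction n with
  | zero => intro r c β; simp
  | succ n ih =>
    intro r c β
    have hz : ι ℝ z * (((List.ofFn (fun i => r i.succ)).map (ι ℝ)).prod * ι ℝ z) = 0 := by
      rw [← mul_assoc, commL12 z (List.ofFn fun i => r i.succ), smul_mul_assoc,
        mul_assoc, ι_sq_zero, mul_zero, smul_zero]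
    rw [Fin.sum_univ_succ (f := fun i => β i • r i), add_assoc, map_add, map_smul]
    rw [List.ofFn_succ (f := fun j => r j - c j • z), List.map_cons, List.prod_cons]
    rw [add_mul]
    have hA : (β 0 • ι ℝ (r 0)) *
        (ι ℝ (r 0 - c 0 • z) *
          ((List.ofFn (fun i => (fun j => r j - c j • z) i.succ)).map (ι ℝ)).prod)
        = ((-1 : ℝ) ^ (n+1) * (c 0 * β 0)) •
          (((List.ofFn r).map (ι ℝ)).prod * ι ℝ z) := by
      rw [smul_mul_assoc, ← mul_assoc, map_sub, map_smul, mul_sub, ι_sq_zero, mul_smul_comm,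
        zero_sub, neg_mul, smul_mul_assoc, mul_assoc]
      rw [commL12 z _, List.length_ofFn, Sz12 z n (fun i => r i.succ) (fun i => c i.succ)]
      rw [List.ofFn_succ (f := r), List.map_cons, List.prod_cons, mul_assoc]
      simp only [smul_neg, mul_smul_comm, smul_smul, ← neg_smul]
      congr 1
      rw [pow_succ]
      ring
    have hB : ι ℝ ((∑ i : Fin n, β i.succ • r i.succ) + βz • z) *
        (ι ℝ (r 0 - c 0 • z) *
          ((List.ofFn (fun i => (fun j => r j - c j • z) i.succ)).map (ι ℝ)).prod)
        = ((-1 : ℝ) ^ (n+1) * (βz + ∑ j : Fin n, c j.succ * β j.succ)) •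
          (((List.ofFn r).map (ι ℝ)).prod * ι ℝ z) := by
      rw [← mul_assoc, swap12, neg_mul, mul_assoc,
        ih (fun i => r i.succ) (fun i => c i.succ) (fun i => β i.succ)]
      rw [mul_smul_comm, map_sub, map_smul, sub_mul, smul_mul_assoc, hz, smul_zero, sub_zero]
      rw [List.ofFn_succ (f := r), List.map_cons, List.prod_cons, mul_assoc, ← neg_smul,
        pow_succ]
      congr 1
      ring
    rw [hA, hB, ← add_smul]
    congr 1
    rw [Fin.sum_univ_succ (f := fun j => c j * β j)]
    ring

private lemma parity_aux12 (c d : ℕ) (h : c % 2 = d % 2) : ((-1 : ℝ)) ^ c = (-1 : ℝ) ^ d := by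
  conv_lhs => rw [← Nat.div_add_mod c 2]
  conv_rhs => rw [← Nat.div_add_mod d 2]
  rw [pow_add, pow_add, pow_mul, pow_mul, neg_one_sq, one_pow, one_pow, h]

private lemma choose_parity12 (n : ℕ) : ((-1 : ℝ)) ^ (n.choose 2) = (-1 : ℝ) ^ (n / 2) := by
  apply parity_aux12
  rw [Nat.choose_two_right]
  obtain ⟨m, rfl | rfl⟩ := Nat.even_or_odd' n
  · have h1 : 2 * m * (2 * m - 1) = 2 * (m * (2 * m - 1)) := by ring
    rw [h1, Nat.mul_div_cancel_left _ (by norm_num)]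
    have h2 : 2 * m / 2 = m := by omega
    rw [h2, Nat.mul_mod]
    rcases Nat.eq_zero_or_pos m with hm | hm
    · simp [hm]
    · have h3 : (2 * m - 1) % 2 = 1 := by omega
      rw [h3]
      omega
  · have h1 : (2 * m + 1) * (2 * m + 1 - 1) = 2 * ((2 * m + 1) * m) := by
      have h0 : 2 * m + 1 - 1 = 2 * m := by omega
      rw [h0]; ring
    rw [h1, Nat.mul_div_cancel_left _ (by norm_num)]
    have h2 : (2 * m + 1) / 2 = m := by omega
    rw [h2, Nat.mul_mod]
    have h3 : (2 * m + 1) % 2 = 1 := by omega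
    rw [h3]
    omega

end Helpers

/-- Algebraic core of Theorem 5.5 of the paper (with the paper's `n` rendered as
`n + 1`): wedging `ν` with the `n`-th power of the transformed symplectic form
`Σ x_j ∧ q_j`, where `q_j = p_j - (2 v_j / u_n) Σ u_i p_i`, produces the
coefficient `2 Σ v_i b_i - b_n`. -/
theorem stmt12 {V : Type*} [AddCommGroup V] [Module ℝ V]
    (n : ℕ) (u v : Fin (n + 1) → ℝ)
    (hu : u (Fin.last n) ≠ 0)
    (huv : ∑ i : Fin (n + 1), u i * v i = u (Fin.last n))
    (x : Fin n → V) (p : Fin (n + 1) → V)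
    (q : Fin n → V)
    (hq : ∀ j : Fin n,
      q j = p j.castSucc -
        (2 * v j.castSucc / u (Fin.last n)) • ∑ i : Fin (n + 1), u i • p i)
    (a : Fin n → ℝ) (b : Fin (n + 1) → ℝ) :
    ((∑ j : Fin n, a j • ι ℝ (x j)) + ∑ i : Fin (n + 1), b i • ι ℝ (p i)) *
        (∑ j : Fin n, ι ℝ (x j) * ι ℝ (q j)) ^ n =
      ((-1 : ℝ) ^ (n / 2) * n.factorial *
          (2 * (∑ i : Fin (n + 1), v i * b i) - b (Fin.last n))) •
        ((List.ofFn fun j : Fin n => ι ℝ (x j)).prod *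
          (List.ofFn fun i : Fin (n + 1) => ι ℝ (p i)).prod) := by
  have hXg : (List.ofFn fun j : Fin n => ι ℝ (x j)) = (List.ofFn x).map (ι ℝ) := by
    rw [List.map_ofFn]; rfl
  have hPg : (List.ofFn fun i : Fin (n + 1) => ι ℝ (p i)) = (List.ofFn p).map (ι ℝ) := by
    rw [List.map_ofFn]; rfl
  -- vector identity: decompose ν's momentum part over the new "basis"
  have hvec : (∑ j : Fin n,
        (b j.castSucc - b (Fin.last n) * u j.castSucc / u (Fin.last n)) • p j.castSucc)
        + (b (Fin.last n) / u (Fin.last n)) • (∑ i : Fin (n + 1), u i • p i)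
      = ∑ i : Fin (n + 1), b i • p i := by
    rw [Finset.smul_sum]
    simp only [smul_smul]
    rw [Fin.sum_univ_castSucc (f := fun i => (b (Fin.last n) / u (Fin.last n) * u i) • p i),
      Fin.sum_univ_castSucc (f := fun i => b i • p i), ← add_assoc, ← Finset.sum_add_distrib]
    congr 1
    · refine Finset.sum_congr rfl fun j _ => ?_
      rw [← add_smul]
      congr 1
      field_simp
      ring
    · congr 1
      field_simp
  have hm : (∑ i : Fin (n + 1), b i • ι ℝ (p i)) = ι ℝ
      ((∑ j : Fin n,
        (b j.castSucc - b (Fin.last n) * u j.castSucc / u (Fin.last n)) • p j.castSucc)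
        + (b (Fin.last n) / u (Fin.last n)) • (∑ i : Fin (n + 1), u i • p i)) := by
    rw [hvec, map_sum]
    simp only [map_smul]
  have hq2 : q = fun j : Fin n =>
      (fun j : Fin n => p j.castSucc) j -
        (fun j : Fin n => 2 * v j.castSucc / u (Fin.last n)) j •
          (∑ i : Fin (n + 1), u i • p i) := funext fun j => hq j
  have h7 := muS12 (∑ i : Fin (n + 1), u i • p i) (b (Fin.last n) / u (Fin.last n)) n
      (fun j : Fin n => p j.castSucc)
      (fun j : Fin n => 2 * v j.castSucc / u (Fin.last n))
      (fun j : Fin n => b j.castSucc - b (Fin.last n) * u j.castSucc / u (Fin.last n))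
  -- the x-part of ν dies against the x-product
  have h0 : (∑ j : Fin n, a j • ι ℝ (x j)) *
      ((((-1 : ℝ) ^ n.choose 2) * n.factorial) •
        (((List.ofFn x).map (ι ℝ)).prod * ((List.ofFn q).map (ι ℝ)).prod)) = 0 := by
    rw [mul_smul_comm, Finset.sum_mul, Finset.sum_eq_zero, smul_zero]
    intro j _
    rw [smul_mul_assoc, ← mul_assoc, killL12 _ _ (memOfFn12 x j), zero_mul, smul_zero]
  -- the r-product against ι z gives u_n times the full p-product
  have hRz : ((List.ofFn (fun j : Fin n => p j.castSucc)).map (ι ℝ)).prod *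
        ι ℝ (∑ i : Fin (n + 1), u i • p i)
      = u (Fin.last n) • ((List.ofFn p).map (ι ℝ)).prod := by
    rw [map_sum, Finset.mul_sum]
    simp only [map_smul, mul_smul_comm]
    rw [Fin.sum_univ_castSucc (f := fun i => u i •
      (((List.ofFn (fun j : Fin n => p j.castSucc)).map (ι ℝ)).prod * ι ℝ (p i)))]
    rw [Finset.sum_eq_zero (fun j _ => by
      rw [killR12 _ _ (memOfFn12 (fun j : Fin n => p j.castSucc) j), smul_zero]), zero_add]
    congr 1
    rw [List.ofFn_succ' p, List.map_concat, List.prod_concat]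
  -- scalar identities
  have hs1 : ∑ j : Fin n, u j.castSucc * v j.castSucc
      = u (Fin.last n) - u (Fin.last n) * v (Fin.last n) := by
    have h := huv
    rw [Fin.sum_univ_castSucc (f := fun i => u i * v i)] at h
    linarith
  have hscal : (b (Fin.last n) / u (Fin.last n)) +
      ∑ j : Fin n, (fun j : Fin n => 2 * v j.castSucc / u (Fin.last n)) j *
        (fun j : Fin n => b j.castSucc - b (Fin.last n) * u j.castSucc / u (Fin.last n)) j
      = (2 * (∑ i : Fin (n + 1), v i * b i) - b (Fin.last n)) / u (Fin.last n) := by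
    simp only []
    rw [Fin.sum_univ_castSucc (f := fun i => v i * b i)]
    rw [Finset.sum_congr rfl (fun j _ => show
      2 * v j.castSucc / u (Fin.last n) *
        (b j.castSucc - b (Fin.last n) * u j.castSucc / u (Fin.last n))
      = (2 / u (Fin.last n)) * (v j.castSucc * b j.castSucc) -
        (2 * b (Fin.last n) / (u (Fin.last n) * u (Fin.last n))) *
          (u j.castSucc * v j.castSucc) from by field_simp)]
    rw [Finset.sum_sub_distrib, ← Finset.mul_sum, ← Finset.mul_sum, hs1]
    field_simp
    ring
  -- main computation
  rw [hXg, hPg, powForm12 n x q, add_mul, h0, zero_add, hm, mul_smul_comm, ← mul_assoc,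
    commL12 _ (List.ofFn x), List.length_ofFn, smul_mul_assoc, mul_assoc, hq2, h7, hRz]
  simp only [smul_smul, mul_smul_comm]
  congr 1
  rw [choose_parity12 n, hscal]
  have hnn : ((-1 : ℝ)) ^ n * (-1) ^ n = 1 := by
    rw [← pow_add]
    exact Even.neg_one_pow ⟨n, rfl⟩
  field_simp
  linear_combination ((∑ i : Fin (n + 1), v i * b i) * 2 - b (Fin.last n)) * hnn
end

section
/- Let n ≥ 1 and let u, v : Fin n → ℝ satisfy u_n ≠ 0 and Σ_{i=1}^{n} u_i v_i = u_n. Let V be a module over ℝ with exterior algebra Λ(V), let x : Fin(n−1) → V and p : Fin n → V be families of elements, and for j ∈ {1,…,n−1} set q_j := p_j − (2v_j/u_n)·Σ_{i=1}^{n} u_i·p_i. Let a : Fin(n−1) → ℝ and b : Fin n → ℝ with Σ_{i=1}^{n} v_i b_i = b_n, and set ν := Σ_{j=1}^{n−1} a_j·x_j + Σ_{i=1}^{n} b_i·p_i. Then in Λ(V): ν ∧ (Σ_{j=1}^{n−1} x_j ∧ q_j)^{n−1} = ν ∧ (Σ_{j=1}^{n−1} x_j ∧ p_j)^{n−1}.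 -/
open ExteriorAlgebra Finset

private lemma sumPowSqZero {R : Type*} [Ring R] {α : Type*} [DecidableEq α] (F : Finset α)
    (t : α → R) (hc : ∀ i j, Commute (t i) (t j)) (hsq : ∀ i, t i * t i = 0) (m : ℕ) :
    (∑ j ∈ F, t j) ^ m =
      m.factorial • ∑ S ∈ F.powersetCard m,
        S.noncommProd t (fun a _ b _ _ => hc a b) := by
  induction m with
  | zero => simp; exact (Finset.noncommProd_empty _ _).symm
  | succ m ih =>
    have hkill : ∀ (S : Finset α), ∀ j ∈ S,
        S.noncommProd t (fun a _ b _ _ => hc a b) * t j = 0 := by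
      intro S j hj
      rw [← Finset.noncommProd_erase_mul S hj t (fun a _ b _ _ => hc a b), mul_assoc,
        hsq, mul_zero]
    rw [pow_succ, ih, smul_mul_assoc, Finset.sum_mul]
    have step : ∀ S ∈ F.powersetCard m,
        (S.noncommProd t (fun a _ b _ _ => hc a b)) * ∑ j ∈ F, t j
          = ∑ j ∈ F \ S, (insert j S).noncommProd t (fun a _ b _ _ => hc a b) := by
      intro S hS
      have hsub : S ⊆ F := (Finset.mem_powersetCard.mp hS).1
      rw [Finset.mul_sum, ← Finset.sum_sdiff hsub]
      have h1 : ∑ j ∈ S, (S.noncommProd t (fun a _ b _ _ => hc a b)) * t j = 0 :=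
        Finset.sum_eq_zero (fun j hj => hkill S j hj)
      rw [h1, add_zero]
      exact Finset.sum_congr rfl fun j hj =>
        (Finset.noncommProd_insert_of_notMem' S j t (fun a _ b _ _ => hc a b)
          (Finset.mem_sdiff.mp hj).2).symm
    rw [Finset.sum_congr rfl step]
    have hmain : (∑ S ∈ F.powersetCard m, ∑ j ∈ F \ S,
          (insert j S).noncommProd t (fun a _ b _ _ => hc a b))
        = ∑ T ∈ F.powersetCard (m+1), ∑ j ∈ T,
          T.noncommProd t (fun a _ b _ _ => hc a b) := by
      rw [Finset.sum_sigma', Finset.sum_sigma']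
      refine Finset.sum_nbij' (fun x => ⟨insert x.2 x.1, x.2⟩)
        (fun y => ⟨y.1.erase y.2, y.2⟩) ?_ ?_ ?_ ?_ ?_
      · rintro ⟨S, j⟩ hx
        simp only [Finset.mem_sigma, Finset.mem_powersetCard, Finset.mem_sdiff] at hx ⊢
        obtain ⟨⟨hsub, hcard⟩, hjF, hjS⟩ := hx
        exact ⟨⟨Finset.insert_subset hjF hsub,
          by rw [Finset.card_insert_of_notMem hjS, hcard]⟩, Finset.mem_insert_self _ _⟩
      · rintro ⟨T, j⟩ hy
        simp only [Finset.mem_sigma, Finset.mem_powersetCard, Finset.mem_sdiff] at hy ⊢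
        obtain ⟨⟨hsub, hcard⟩, hjT⟩ := hy
        refine ⟨⟨(Finset.erase_subset _ _).trans hsub, ?_⟩,
          hsub hjT, Finset.notMem_erase _ _⟩
        rw [Finset.card_erase_of_mem hjT, hcard]
        omega
      · rintro ⟨S, j⟩ hx
        simp only [Finset.mem_sigma, Finset.mem_sdiff] at hx
        simp [Finset.erase_insert hx.2.2]
      · rintro ⟨T, j⟩ hy
        simp only [Finset.mem_sigma] at hy
        simp [Finset.insert_erase hy.2]
      · rintro ⟨S, j⟩ hx
        rfl
    rw [hmain]
    have hcount : ∑ T ∈ F.powersetCard (m+1), ∑ j ∈ T,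
          T.noncommProd t (fun a _ b _ _ => hc a b)
        = (m+1) • ∑ T ∈ F.powersetCard (m+1), T.noncommProd t (fun a _ b _ _ => hc a b) := by
      rw [Finset.smul_sum]
      refine Finset.sum_congr rfl fun T hT => ?_
      rw [Finset.sum_const, (Finset.mem_powersetCard.mp hT).2]
    rw [hcount, smul_smul]
    congr 1
    rw [Nat.factorial_succ, Nat.mul_comm]

section Quad
variable {R : Type*} [Ring R]

private lemma triA (Q y z : R) (hyz : y * z = -(z * y)) (h0 : Q * z = 0) :
    (Q * y) * z = 0 := by
  rw [mul_assoc, hyz, mul_neg, ← mul_assoc, h0, zero_mul, neg_zero]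

private lemma quadKill (Q y z w : R) (hyQ : y * Q = Q * y) (h0 : Q * y = 0) :
    y * ((Q * z) * w) = 0 := by
  rw [← mul_assoc, ← mul_assoc, hyQ, h0, zero_mul, zero_mul]

private lemma quad1 (Q y z : R) (hyQ : y * Q = Q * y) (hy2 : y * y = 0) :
    y * ((Q * y) * z) = 0 := by
  rw [← mul_assoc, ← mul_assoc, hyQ, mul_assoc Q y y, hy2, mul_zero, zero_mul]

private lemma quadB (Q y z w C : R) (hzQ : z * Q = Q * z) (hzy : z * y = -(y * z))
    (hC : Q * (y * z) = C) : z * ((Q * y) * w) = -(C * w) := by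
  rw [← mul_assoc, ← mul_assoc, hzQ, mul_assoc Q z y, hzy, mul_neg, hC, neg_mul]

private lemma quadC (Q y w : R) (hwQ : w * Q = Q * w) (hwy : w * y = -(y * w))
    (hw2 : w * w = 0) : w * ((Q * y) * w) = 0 := by
  rw [← mul_assoc, ← mul_assoc, hwQ, mul_assoc Q w y, hwy, mul_neg, neg_mul, mul_assoc,
    mul_assoc, hw2, mul_zero, mul_zero, neg_zero]

end Quad


private lemma keyZero {R : Type*} [Ring R] [Algebra ℝ R] (N : ℕ)
    (X : Fin (N+1) → R) (P : Fin (N+2) → R)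
    (cc : Fin (N+1) → ℝ) (uu : Fin (N+2) → ℝ) (a : Fin (N+1) → ℝ) (b : Fin (N+2) → ℝ)
    (hXX : ∀ i j, X i * X j = -(X j * X i))
    (hPP : ∀ i j, P i * P j = -(P j * P i))
    (hXP : ∀ i j, X i * P j = -(P j * X i))
    (hX2 : ∀ i, X i * X i = 0) (hP2 : ∀ i, P i * P i = 0)
    (t : Fin (N+1) → R) (htdef : ∀ j, t j = X j * P j.castSucc)
    (hscal : ∑ k : Fin (N+1),
      cc k * (uu k.castSucc * b (Fin.last (N+1)) - uu (Fin.last (N+1)) * b k.castSucc) = 0) :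
    ((∑ j, a j • X j) + ∑ i, b i • P i) *
      (∑ j : Fin (N+1), X j * P j.castSucc) ^ N *
      (∑ j : Fin (N+1), cc j • X j) * (∑ i : Fin (N+2), uu i • P i) = 0 := by
  have hPX : ∀ i j, P j * X i = -(X i * P j) := fun i j => by rw [hXP i j, neg_neg]
  -- `t j` commutes with every `X k`
  have hcomm1 : ∀ j k, t j * X k = X k * t j := by
    intro j k
    rw [htdef, mul_assoc, hPX k j.castSucc, mul_neg, ← mul_assoc, hXX j k, neg_mul, neg_neg,
      mul_assoc]
  -- `t j` commutes with every `P i`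
  have hcomm2 : ∀ j i, t j * P i = P i * t j := by
    intro j i
    rw [htdef, mul_assoc, hPP j.castSucc i, mul_neg, ← mul_assoc, hXP j i, neg_mul, neg_neg,
      mul_assoc]
  have hct : ∀ j k, Commute (t j) (t k) := by
    intro j k
    show t j * t k = t k * t j
    rw [htdef k, ← mul_assoc, hcomm1 j k, mul_assoc, hcomm2 j k.castSucc, ← mul_assoc]
  have hsq : ∀ j, t j * t j = 0 := by
    intro j
    rw [htdef j, ← mul_assoc, mul_assoc (X j), hPX j j.castSucc, mul_neg, ← mul_assoc, hX2,
      zero_mul, neg_zero, zero_mul]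
  have hcX : ∀ (S : Finset (Fin (N+1))) (j),
      X j * S.noncommProd t (fun a _ b _ _ => hct a b)
        = S.noncommProd t (fun a _ b _ _ => hct a b) * X j := fun S j =>
    (Finset.noncommProd_commute S t _ (X j) fun i _ => ((hcomm1 i j).symm : _ = _)).eq
  have hcP : ∀ (S : Finset (Fin (N+1))) (i),
      P i * S.noncommProd t (fun a _ b _ _ => hct a b)
        = S.noncommProd t (fun a _ b _ _ => hct a b) * P i := fun S i =>
    (Finset.noncommProd_commute S t _ (P i) fun j _ => ((hcomm2 j i).symm : _ = _)).eq
  have hkX : ∀ (S : Finset (Fin (N+1))) (j) (_ : j ∈ S),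
      S.noncommProd t (fun a _ b _ _ => hct a b) * X j = 0 := by
    intro S j hj
    rw [← Finset.noncommProd_erase_mul S hj t (fun a _ b _ _ => hct a b), mul_assoc,
      hcomm1 j j, htdef, ← mul_assoc (X j), hX2, zero_mul, mul_zero]
  have hkP : ∀ (S : Finset (Fin (N+1))) (j) (_ : j ∈ S),
      S.noncommProd t (fun a _ b _ _ => hct a b) * P j.castSucc = 0 := by
    intro S j hj
    rw [← Finset.noncommProd_erase_mul S hj t (fun a _ b _ _ => hct a b), mul_assoc,
      htdef, mul_assoc, hP2, mul_zero, mul_zero]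
  -- notation
  set L : Fin (N+2) := Fin.last (N+1) with hL
  set nu : R := (∑ j, a j • X j) + ∑ i, b i • P i with hnu
  -- rewrite the power as a sum over subsets of size N
  have hW := sumPowSqZero (univ : Finset (Fin (N+1))) t hct hsq N
  simp only [← htdef]
  rw [hW]
  -- subsets of size N of `Fin (N+1)` are complements of points
  have himg : Finset.powersetCard N (univ : Finset (Fin (N+1)))
      = Finset.image (fun k => univ.erase k) univ := by
    ext S
    simp only [Finset.mem_powersetCard, Finset.mem_image, Finset.mem_univ, true_and,
      Finset.subset_univ]
    constructor
    · intro hcard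
      have hne : (univ \ S).Nonempty := by
        rw [← Finset.card_pos, Finset.card_sdiff_of_subset (Finset.subset_univ S), Finset.card_univ,
          Fintype.card_fin, hcard]
        omega
      obtain ⟨k, hk⟩ := hne
      rw [Finset.mem_sdiff] at hk
      refine ⟨k, ?_⟩
      have hsub : S ⊆ univ.erase k := fun s hs =>
        Finset.mem_erase.mpr ⟨fun h => hk.2 (h ▸ hs), Finset.mem_univ _⟩
      have hcard2 : (univ.erase k).card ≤ S.card := by
        rw [Finset.card_erase_of_mem (Finset.mem_univ k), Finset.card_univ, Fintype.card_fin,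
          hcard]
        omega
      exact (Finset.eq_of_subset_of_card_le hsub hcard2).symm
    · rintro ⟨k, rfl⟩
      rw [Finset.card_erase_of_mem (Finset.mem_univ k), Finset.card_univ, Fintype.card_fin]
      omega
  rw [himg, Finset.sum_image (fun k _ k' _ h =>
    Finset.erase_injOn univ (Finset.mem_univ k) (Finset.mem_univ k') h)]
  rw [mul_smul_comm, smul_mul_assoc, smul_mul_assoc]
  have hinner : ∑ k : Fin (N+1),
        ((nu * (univ.erase k).noncommProd t (fun a _ b _ _ => hct a b)) *
          (∑ j : Fin (N+1), cc j • X j)) * (∑ i : Fin (N+2), uu i • P i)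
      = ((nu * ∑ k : Fin (N+1), (univ.erase k).noncommProd t (fun a _ b _ _ => hct a b)) *
          (∑ j : Fin (N+1), cc j • X j)) * (∑ i : Fin (N+2), uu i • P i) := by
    rw [← Finset.sum_mul, ← Finset.sum_mul, ← Finset.mul_sum]
  rw [← hinner]
  -- the per-`k` evaluation
  have hper : ∀ k : Fin (N+1),
      ((nu * (univ.erase k).noncommProd t (fun a _ b _ _ => hct a b)) *
          (∑ j : Fin (N+1), cc j • X j)) * (∑ i : Fin (N+2), uu i • P i)
        = (cc k * (uu k.castSucc * b L - uu L * b k.castSucc)) •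
            ((univ : Finset (Fin (N+1))).noncommProd t (fun a _ b _ _ => hct a b) * P L) := by
    intro k
    set Q : R := (univ.erase k).noncommProd t (fun a _ b _ _ => hct a b) with hQ
    set C : R := (univ : Finset (Fin (N+1))).noncommProd t (fun a _ b _ _ => hct a b) with hC
    have hQtk : Q * t k = C :=
      Finset.noncommProd_erase_mul univ (Finset.mem_univ k) t (fun a _ b _ _ => hct a b)
    have s1 : Q * (∑ j : Fin (N+1), cc j • X j) = cc k • (Q * X k) := by
      rw [Finset.mul_sum]
      simp_rw [mul_smul_comm]
      refine Finset.sum_eq_single_of_mem k (Finset.mem_univ k) fun j _ hjk => ?_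
      rw [hkX (univ.erase k) j (Finset.mem_erase.mpr ⟨hjk, Finset.mem_univ j⟩), smul_zero]
    have s2 : (Q * X k) * (∑ i : Fin (N+2), uu i • P i)
        = uu k.castSucc • C + uu L • ((Q * X k) * P L) := by
      rw [Finset.mul_sum]
      simp_rw [mul_smul_comm]
      rw [Fin.sum_univ_castSucc]
      congr 1
      rw [Finset.sum_eq_single_of_mem k (Finset.mem_univ k) fun j _ hjk => ?_]
      · rw [mul_assoc, ← htdef k, hQtk]
      · rw [triA Q (X k) (P j.castSucc) (hXP k j.castSucc)
          (hkP (univ.erase k) j (Finset.mem_erase.mpr ⟨hjk, Finset.mem_univ j⟩)), smul_zero]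
    have s3 : nu * C = b L • (C * P L) := by
      rw [hnu, add_mul, Finset.sum_mul, Finset.sum_mul]
      have h1 : ∑ j : Fin (N+1), (a j • X j) * C = 0 :=
        Finset.sum_eq_zero fun j _ => by
          rw [smul_mul_assoc, hcX univ j, hkX univ j (Finset.mem_univ j), smul_zero]
      rw [h1, zero_add, Fin.sum_univ_castSucc]
      have h2 : ∑ j : Fin (N+1), (b j.castSucc • P j.castSucc) * C = 0 :=
        Finset.sum_eq_zero fun j _ => by
          rw [smul_mul_assoc, hcP univ j.castSucc, hkP univ j (Finset.mem_univ j), smul_zero]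
      rw [h2, zero_add, smul_mul_assoc, hcP univ L, ← smul_mul_assoc, smul_mul_assoc]
    have s4 : nu * ((Q * X k) * P L) = (-(b k.castSucc)) • (C * P L) := by
      rw [hnu, add_mul, Finset.sum_mul, Finset.sum_mul]
      have h1 : ∑ j : Fin (N+1), (a j • X j) * ((Q * X k) * P L) = 0 := by
        refine Finset.sum_eq_zero fun j _ => ?_
        rw [smul_mul_assoc]
        by_cases hjk : j = k
        · subst hjk
          rw [quad1 Q (X j) (P L) (hcX _ j) (hX2 j), smul_zero]
        · rw [quadKill Q (X j) (X k) (P L) (hcX _ j)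
            (hkX (univ.erase k) j (Finset.mem_erase.mpr ⟨hjk, Finset.mem_univ j⟩)), smul_zero]
      rw [h1, zero_add, Fin.sum_univ_castSucc]
      have h2 : ∑ j : Fin (N+1), (b j.castSucc • P j.castSucc) * ((Q * X k) * P L) =
          b k.castSucc • (-(C * P L)) := by
        rw [Finset.sum_eq_single_of_mem k (Finset.mem_univ k) fun j _ hjk => ?_]
        · rw [smul_mul_assoc, quadB Q (X k) (P k.castSucc) (P L) C (hcP _ k.castSucc)
            (hPX k k.castSucc) (by rw [← htdef k, hQtk])]
        · rw [smul_mul_assoc, quadKill Q (P j.castSucc) (X k) (P L) (hcP _ j.castSucc)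
            (hkP (univ.erase k) j (Finset.mem_erase.mpr ⟨hjk, Finset.mem_univ j⟩)), smul_zero]
      rw [h2, smul_mul_assoc, quadC Q (X k) (P L) (hcP _ L) (hPX k L) (hP2 L), smul_zero,
        add_zero]
      module
    calc ((nu * Q) * (∑ j : Fin (N+1), cc j • X j)) * (∑ i : Fin (N+2), uu i • P i)
        = (nu * (Q * (∑ j : Fin (N+1), cc j • X j))) * (∑ i : Fin (N+2), uu i • P i) := by
          rw [mul_assoc nu]
      _ = cc k • ((nu * (Q * X k)) * (∑ i : Fin (N+2), uu i • P i)) := by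
          rw [s1, mul_smul_comm, smul_mul_assoc]
      _ = cc k • (nu * ((Q * X k) * (∑ i : Fin (N+2), uu i • P i))) := by rw [mul_assoc]
      _ = cc k • (nu * (uu k.castSucc • C + uu L • ((Q * X k) * P L))) := by rw [s2]
      _ = cc k • (uu k.castSucc • (nu * C) + uu L • (nu * ((Q * X k) * P L))) := by
          rw [mul_add, mul_smul_comm, mul_smul_comm]
      _ = cc k • (uu k.castSucc • (b L • (C * P L)) + uu L • ((-(b k.castSucc)) • (C * P L))) := by
          rw [s3, s4]
      _ = (cc k * (uu k.castSucc * b L - uu L * b k.castSucc)) • (C * P L) := by module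
  rw [Finset.sum_congr rfl fun k _ => hper k, ← Finset.sum_smul, hscal, zero_smul, smul_zero]


section Iota
variable {V : Type*} [AddCommGroup V] [Module ℝ V]

private lemma iota_anticomm (y z : V) :
    ι ℝ y * ι ℝ z = -(ι ℝ z * ι ℝ y) :=
  eq_neg_of_add_eq_zero_left (ExteriorAlgebra.ι_add_mul_swap y z)

private lemma iota_comm2 (y z w : V) :
    Commute (ι ℝ y * ι ℝ z) (ι ℝ w) := by
  show _ = _
  rw [mul_assoc, iota_anticomm z w, mul_neg, ← mul_assoc, iota_anticomm y w, neg_mul,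
    neg_neg, mul_assoc]

private lemma iota_aba (y z : V) : (ι ℝ y * ι ℝ z) * ι ℝ y = 0 := by
  rw [mul_assoc, iota_anticomm z y, mul_neg, ← mul_assoc, ι_sq_zero, zero_mul, neg_zero]

private lemma iotaPairSq (y z : V) :
    (ι ℝ y * ι ℝ z) * (ι ℝ y * ι ℝ z) = 0 := by
  rw [← mul_assoc, iota_aba, zero_mul]

end Iota

/-- The hybrid Jacobian of the restricted nonholonomic impact map equals 1
(conclusion of Theorem 5.5 of the paper, with the paper's `n` rendered as
`n + 1`): under the restriction identity `Σ v_i b_i = b_n`, the transformed and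
untransformed top forms agree. -/
theorem stmt13 {V : Type*} [AddCommGroup V] [Module ℝ V]
    (n : ℕ) (u v : Fin (n + 1) → ℝ)
    (hu : u (Fin.last n) ≠ 0)
    (huv : ∑ i : Fin (n + 1), u i * v i = u (Fin.last n))
    (x : Fin n → V) (p : Fin (n + 1) → V)
    (q : Fin n → V)
    (hq : ∀ j : Fin n,
      q j = p j.castSucc -
        (2 * v j.castSucc / u (Fin.last n)) • ∑ i : Fin (n + 1), u i • p i)
    (a : Fin n → ℝ) (b : Fin (n + 1) → ℝ)
    (hvb : ∑ i : Fin (n + 1), v i * b i = b (Fin.last n)) :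
    ((∑ j : Fin n, a j • ι ℝ (x j)) + ∑ i : Fin (n + 1), b i • ι ℝ (p i)) *
        (∑ j : Fin n, ι ℝ (x j) * ι ℝ (q j)) ^ n =
      ((∑ j : Fin n, a j • ι ℝ (x j)) + ∑ i : Fin (n + 1), b i • ι ℝ (p i)) *
        (∑ j : Fin n, ι ℝ (x j) * ι ℝ (p j.castSucc)) ^ n := by
  cases n with
  | zero => rw [pow_zero, pow_zero]
  | succ N =>
    -- the scalar identity coming from the two projection identities
    have e1 : ∑ k : Fin (N+1), u k.castSucc * v k.castSucc
        = u (Fin.last (N+1)) - u (Fin.last (N+1)) * v (Fin.last (N+1)) := by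
      rw [Fin.sum_univ_castSucc] at huv
      linarith
    have e2 : ∑ k : Fin (N+1), v k.castSucc * b k.castSucc
        = b (Fin.last (N+1)) - v (Fin.last (N+1)) * b (Fin.last (N+1)) := by
      rw [Fin.sum_univ_castSucc] at hvb
      linarith
    have hscal : ∑ k : Fin (N+1), (2 * v k.castSucc / u (Fin.last (N+1))) *
        (u k.castSucc * b (Fin.last (N+1)) - u (Fin.last (N+1)) * b k.castSucc) = 0 := by
      have h3 : ∀ k : Fin (N+1), (2 * v k.castSucc / u (Fin.last (N+1))) *
          (u k.castSucc * b (Fin.last (N+1)) - u (Fin.last (N+1)) * b k.castSucc)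
          = (2 * b (Fin.last (N+1)) / u (Fin.last (N+1))) * (u k.castSucc * v k.castSucc)
            - 2 * (v k.castSucc * b k.castSucc) := by
        intro k
        field_simp
      rw [Finset.sum_congr rfl fun k _ => h3 k, Finset.sum_sub_distrib, ← Finset.mul_sum,
        ← Finset.mul_sum, e1, e2]
      field_simp
      ring
    -- the key vanishing statement
    have key : ((∑ j : Fin (N+1), a j • ι ℝ (x j)) + ∑ i : Fin (N+2), b i • ι ℝ (p i)) *
        (∑ j : Fin (N+1), ι ℝ (x j) * ι ℝ (p j.castSucc)) ^ N *
        (∑ j : Fin (N+1), (2 * v j.castSucc / u (Fin.last (N+1))) • ι ℝ (x j)) *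
        (∑ i : Fin (N+2), u i • ι ℝ (p i)) = 0 :=
      keyZero N (fun j => ι ℝ (x j)) (fun i => ι ℝ (p i))
        (fun j => 2 * v j.castSucc / u (Fin.last (N+1))) u a b
        (fun i j => iota_anticomm _ _) (fun i j => iota_anticomm _ _)
        (fun i j => iota_anticomm _ _)
        (fun i => ι_sq_zero _) (fun i => ι_sq_zero _)
        (fun j => ι ℝ (x j) * ι ℝ (p j.castSucc)) (fun j => rfl) hscal
    have key' : ((∑ j : Fin (N+1), a j • ι ℝ (x j)) + ∑ i : Fin (N+2), b i • ι ℝ (p i)) *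
        ((∑ j : Fin (N+1), ι ℝ (x j) * ι ℝ (p j.castSucc)) ^ N *
          ((∑ j : Fin (N+1), (2 * v j.castSucc / u (Fin.last (N+1))) • ι ℝ (x j)) *
            (∑ i : Fin (N+2), u i • ι ℝ (p i)))) = 0 := by
      rw [← mul_assoc, ← mul_assoc]
      exact key
    -- the transformed symplectic-type form
    have hq' : (∑ j : Fin (N+1), ι ℝ (x j) * ι ℝ (q j))
        = (∑ j : Fin (N+1), ι ℝ (x j) * ι ℝ (p j.castSucc))
          - (∑ j : Fin (N+1), (2 * v j.castSucc / u (Fin.last (N+1))) • ι ℝ (x j)) *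
            (∑ i : Fin (N+2), u i • ι ℝ (p i)) := by
      have h2 : ι ℝ (∑ i : Fin (N+2), u i • p i) = ∑ i : Fin (N+2), u i • ι ℝ (p i) := by
        rw [map_sum]
        simp only [map_smul]
      have h1 : ∀ j : Fin (N+1), ι ℝ (x j) * ι ℝ (q j)
          = ι ℝ (x j) * ι ℝ (p j.castSucc)
            - (2 * v j.castSucc / u (Fin.last (N+1))) •
                (ι ℝ (x j) * ι ℝ (∑ i : Fin (N+2), u i • p i)) := by
        intro j
        rw [hq j, map_sub, map_smul, mul_sub, mul_smul_comm]
      rw [Finset.sum_congr rfl fun j _ => h1 j, Finset.sum_sub_distrib]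
      congr 1
      rw [Finset.sum_mul]
      refine Finset.sum_congr rfl fun j _ => ?_
      rw [h2, smul_mul_assoc]
    have hYv : (∑ j : Fin (N+1), (2 * v j.castSucc / u (Fin.last (N+1))) • ι ℝ (x j))
        = ι ℝ (∑ j : Fin (N+1), (2 * v j.castSucc / u (Fin.last (N+1))) • x j) := by
      rw [map_sum]
      simp only [map_smul]
    have hPv : (∑ i : Fin (N+2), u i • ι ℝ (p i)) = ι ℝ (∑ i : Fin (N+2), u i • p i) := by
      rw [map_sum]
      simp only [map_smul]
    set nu : ExteriorAlgebra ℝ V :=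
      (∑ j : Fin (N+1), a j • ι ℝ (x j)) + ∑ i : Fin (N+2), b i • ι ℝ (p i) with hnu
    set W : ExteriorAlgebra ℝ V :=
      ∑ j : Fin (N+1), ι ℝ (x j) * ι ℝ (p j.castSucc) with hW
    set Ys : ExteriorAlgebra ℝ V :=
      ∑ j : Fin (N+1), (2 * v j.castSucc / u (Fin.last (N+1))) • ι ℝ (x j) with hYs
    set Ps : ExteriorAlgebra ℝ V := ∑ i : Fin (N+2), u i • ι ℝ (p i) with hPs
    have hEe : (Ys * Ps) * (Ys * Ps) = 0 := by
      rw [hYv, hPv]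
      exact iotaPairSq _ _
    have hcomm : Commute W (-(Ys * Ps)) := by
      refine Commute.neg_right ?_
      refine Commute.sum_left _ _ _ fun j _ => ?_
      refine Commute.mul_right ?_ ?_
      · exact Commute.sum_right _ _ _ fun k _ =>
          Commute.smul_right (iota_comm2 (x j) (p j.castSucc) (x k)) _
      · exact Commute.sum_right _ _ _ fun i _ =>
          Commute.smul_right (iota_comm2 (x j) (p j.castSucc) (p i)) _
    rw [hq', sub_eq_add_neg, Commute.add_pow hcomm, Finset.mul_sum, Finset.sum_range_succ,
      Finset.sum_range_succ]
    have hz : ∀ m ∈ Finset.range N,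
        nu * (W ^ m * (-(Ys * Ps)) ^ (N + 1 - m) * ((N+1).choose m : ExteriorAlgebra ℝ V))
          = 0 := by
      intro m hm
      obtain ⟨k, hk⟩ : ∃ k, N + 1 - m = k + 2 :=
        ⟨N - 1 - m, by have := Finset.mem_range.mp hm; omega⟩
      rw [hk, pow_succ, pow_succ, mul_assoc ((-(Ys * Ps)) ^ k), neg_mul_neg, hEe, mul_zero,
        mul_zero, zero_mul, mul_zero]
    have hmid : nu * (W ^ N * (-(Ys * Ps)) ^ (N + 1 - N) * ((N+1).choose N : ExteriorAlgebra ℝ V))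
        = 0 := by
      have h1 : N + 1 - N = 1 := by omega
      rw [h1, pow_one, mul_neg, neg_mul, mul_neg, ← mul_assoc, key', zero_mul, neg_zero]
    rw [Finset.sum_eq_zero hz, hmid, zero_add, zero_add, Nat.sub_self, pow_zero, mul_one,
      Nat.choose_self, Nat.cast_one, mul_one]
end
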